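/- If a strategy profile s* is the unique outcome of iterated deletion of strictly dominated strategies in a finite strategic game, then s* is a pure-strategy Nash equilibrium. -/

import Mathlib

/-- Strategy `s2` of player `i` is strictly dominated (relative to surviving sets `T`)
if some surviving `s1` gives strictly higher payoff against every surviving profile. -/
def StrictlyDominated {ι : Type*} {S : ι → Type*} [DecidableEq ι]
    (u : ι → (∀ j, S j) → ℝ) (T : ∀ j, Set (S j)) (i : ι) (s2 : S i) : Prop :=
  ∃ s1 ∈ T i, ∀ σ : ∀ j, S j, (∀ j, σ j ∈ T j) →
    u i (Function.update σ i s1) > u i (Function.update σ i s2)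

/-- Iterated deletion of strictly dominated strategies. -/
def IDSDS {ι : Type*} {S : ι → Type*} [DecidableEq ι]
    (u : ι → (∀ j, S j) → ℝ) : ℕ → ∀ i, Set (S i)
  | 0 => fun _ => Set.univ
  | (n + 1) => fun i =>
      {s ∈ IDSDS u n i | ¬ StrictlyDominated u (IDSDS u n) i s}

theorem idsds_subset {ι : Type*} {S : ι → Type*} [DecidableEq ι]
    (u : ι → (∀ j, S j) → ℝ) {a b : ℕ} (hab : a ≤ b) (i : ι) :
    IDSDS u b i ⊆ IDSDS u a i := by
  induction b with
  | zero => simp_all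
  | succ b ih =>
    rcases Nat.lt_or_ge a (b+1) with hlt | hge
    · exact fun s hs => ih (by omega) hs.1
    · have : a = b + 1 := by omega
      subst this; exact fun s hs => hs

/-- in a finite strategic game, if `s*` is the unique outcome of iterated
deletion of strictly dominated strategies, then `s*` is a pure-strategy Nash equilibrium. -/
theorem idsds_unique_outcome_is_nash
    {ι : Type*} {S : ι → Type*} [DecidableEq ι] [Fintype ι]
    [∀ i, Fintype (S i)] [∀ i, Nonempty (S i)]
    (u : ι → (∀ j, S j) → ℝ) (sstar : ∀ i, S i)
    (h : ∃ n : ℕ, ∀ i, IDSDS u n i = {sstar i}) :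
    ∀ (i : ι) (s' : S i), u i sstar ≥ u i (Function.update sstar i s') := by
  obtain ⟨n, hn⟩ := h
  intro i s'
  have hstar : ∀ m ≤ n, ∀ j, sstar j ∈ IDSDS u m j := by
    intro m hm j
    exact idsds_subset u hm j (by rw [hn j]; rfl)
  have key : ∀ d, ∀ s ∈ IDSDS u (n - d) i,
      u i (Function.update sstar i s) ≤ u i sstar := by
    intro d
    induction d with
    | zero =>
      intro s hs
      simp only [Nat.sub_zero, hn i, Set.mem_singleton_iff] at hs
      subst hs
      rw [Function.update_eq_self]
    | succ d ih =>
      intro s hs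
      by_cases hd : n ≤ d
      · have heq : n - (d+1) = n - d := by omega
        exact ih s (heq ▸ hs)
      · set m := n - (d+1) with hmdef
        have hm1 : m + 1 = n - d := by omega
        have hsfin : ((IDSDS u m i).toFinite.toFinset).Nonempty :=
          ⟨s, by simpa using hs⟩
        obtain ⟨t, ht, hmax⟩ := Finset.exists_max_image _
          (fun x => u i (Function.update sstar i x)) hsfin
        have htm : t ∈ IDSDS u m i := by simpa using ht
        have htnd : ¬ StrictlyDominated u (IDSDS u m) i t := by
          rintro ⟨s1, hs1, hdom⟩
          have h1 := hdom sstar (fun j => hstar m (by omega) j)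
          have h2 := hmax s1 (by simpa using hs1)
          linarith
        have htnext : t ∈ IDSDS u (m+1) i := ⟨htm, htnd⟩
        have h1 := ih t (hm1 ▸ htnext)
        have h2 := hmax s (by simpa using hs)
        linarith
  have h0 : s' ∈ IDSDS u (n - n) i := by
    simp [IDSDS]
  exact key n s' h0
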